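/- Let 𝒜 = (Q, A, τ) be a Mealy automaton with A finite and S the semigroup it generates. Let v₁, v₂ ∈ A* and suppose there exists a bijection φ : S·v₁ → S·v₂ such that φ(v₁) = v₂ and ψ_{v₁}^φ = ψ_{v₂}. Then for every ξ ∈ A^ω, the orbits S·(v₁⌢ξ) and S·(v₂⌢ξ) have the same cardinality. -/

import Mathlib

/-!
Framework for Mealy automata `𝒜 = (Q, A, τ)` with `τ q a = (q·a, q@a)`.

* `Mealy.act τ q` is the endomorphism of the free monoid `A*` (modelled as `List A`)
  induced by the state `q`, defined by `q·(a⌢u) = (q·a)⌢((q@a)·u)`.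
* `Mealy.Sgp τ` is the semigroup (with identity adjoined, i.e. the submonoid) of
  `End(A*)` generated by the states.
* `Mealy.extω f ξ` is the extension of a length- and prefix-preserving endomorphism
  `f` of `A*` to right-infinite words `ξ : ℕ → A`: its `n`-th letter is the `n`-th
  letter of the image of the length-`(n+1)` prefix of `ξ`.
* `Mealy.catω v ξ` is the concatenation `v⌢ξ` of a finite word with an infinite word.
* `Mealy.orbit τ u` and `Mealy.orbitω τ ξ` are the orbits `S·u` and `S·ξ`.
* `Mealy.mval τ v` is `m_v = sup_{ξ ∈ A^ω} |S·(v⌢ξ)| ∈ ℕ∞`.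
* `Mealy.sect f w` is the section `f@w`, characterized for `f ∈ S` by
  `f·(w⌢u) = (f·w)⌢((f@w)·u)`.
-/

namespace Mealy

variable {Q A : Type*}

/-- The action of a state on a finite word: `q·(a⌢u) = (q·a)⌢((q@a)·u)`. -/
def act (τ : Q → A → A × Q) : Q → List A → List A
  | _, [] => []
  | q, a :: u => (τ q a).1 :: act τ (τ q a).2 u

/-- The semigroup `S ≤ End(A*)` generated by the states of the automaton
(as a submonoid of `Function.End (List A)`, where multiplication is composition). -/
def Sgp (τ : Q → A → A × Q) : Submonoid (Function.End (List A)) :=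
  Submonoid.closure { f : Function.End (List A) | ∃ q : Q, f = act τ q }

/-- Extension of a (length- and prefix-preserving) endomorphism of `A*` to `A^ω`:
the `n`-th letter of `f·ξ` is the `n`-th letter of the image of the prefix of `ξ`
of length `n+1`. -/
def extω (f : Function.End (List A)) (ξ : ℕ → A) : ℕ → A :=
  fun n => (f ((List.range (n + 1)).map ξ)).getD n (ξ n)

/-- Concatenation `v⌢ξ` of a finite word with a right-infinite word. -/
def catω (v : List A) (ξ : ℕ → A) : ℕ → A :=
  fun n => v.getD n (ξ (n - v.length))

/-- The orbit `S·u` of a finite word. -/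
def orbit (τ : Q → A → A × Q) (u : List A) : Set (List A) :=
  (fun f : Function.End (List A) => f u) '' (Sgp τ : Set (Function.End (List A)))

/-- The orbit `S·ξ` of a right-infinite word. -/
def orbitω (τ : Q → A → A × Q) (ξ : ℕ → A) : Set (ℕ → A) :=
  (fun f : Function.End (List A) => extω f ξ) '' (Sgp τ : Set (Function.End (List A)))

/-- `m_v = sup_{ξ ∈ A^ω} |S·(v⌢ξ)| ∈ ℕ ∪ {∞}`. -/
noncomputable def mval (τ : Q → A → A × Q) (v : List A) : ℕ∞ :=
  ⨆ ξ : ℕ → A, (orbitω τ (catω v ξ)).encard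

/-- The section `f@w` of an endomorphism of `A*` at the word `w`. -/
def sect (f : Function.End (List A)) (w : List A) : Function.End (List A) :=
  fun u => (f (w ++ u)).drop w.length

end Mealy

/-!
Every `s ∈ S` acts on `v⌢ξ` as `s·(v⌢ξ) = (s·v)⌢((s@v)·ξ)`, so two elements `s, t ∈ S` agree on
`v⌢ξ` exactly when `s·v = t·v` and `(s@v)·ξ = (t@v)·ξ`. The bijection `φ` transports the first
condition from `v₁` to `v₂` (it is injective and `φ(s·v₁) = s·v₂`), and `ψ_{v₁}^φ = ψ_{v₂}` gives
`s@v₁ = s@v₂`, so the two orbits are images of `S` under maps with the same fibres.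
-/

universe u

lemma Cardinal.mk_image_eq_mk_image_of_eq_iff {α : Type*} {β γ : Type u} {s : Set α}
    {f : α → β} {g : α → γ} (h : ∀ x ∈ s, ∀ y ∈ s, f x = f y ↔ g x = g y) :
    Cardinal.mk (f '' s) = Cardinal.mk (g '' s) := by
  rw [Set.image_eq_range, Set.image_eq_range]
  have hker : ∀ x y : s, Setoid.ker (fun x : s => f x) x y ↔ Setoid.ker (fun x : s => g x) x y :=
    fun x y => h x x.2 y y.2
  exact Cardinal.mk_congr <| (Setoid.quotientKerEquivRange _).symm.trans <|
    (Quotient.congrRight hker).trans (Setoid.quotientKerEquivRange _)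

namespace Mealy

section

variable {Q A : Type*}

/-- `run τ q u` is the state `q@u`. -/
def run (τ : Q → A → A × Q) : Q → List A → Q
  | q, [] => q
  | q, a :: u => run τ (τ q a).2 u

lemma length_act (τ : Q → A → A × Q) (q : Q) (u : List A) :
    (act τ q u).length = u.length := by
  induction u generalizing q with
  | nil => rfl
  | cons a u ih => simp [act, ih]

lemma act_append (τ : Q → A → A × Q) (q : Q) (u w : List A) :
    act τ q (u ++ w) = act τ q u ++ act τ (run τ q u) w := by
  induction u generalizing q with
  | nil => rfl
  | cons a u ih => simp [act, run, ih]

structure IsSynchronous (f : Function.End (List A)) : Prop where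
  length_apply : ∀ u, (f u).length = u.length
  apply_append : ∀ u w, f (u ++ w) = f u ++ sect f u w

lemma isSynchronous_act (τ : Q → A → A × Q) (q : Q) : IsSynchronous (act τ q) where
  length_apply := length_act τ q
  apply_append u w := by
    simp [sect, act_append, length_act]

lemma isSynchronous_one : IsSynchronous (1 : Function.End (List A)) where
  length_apply _ := rfl
  apply_append u w := by simp [sect, Function.End.one_def]

lemma IsSynchronous.mul {f g : Function.End (List A)} (hf : IsSynchronous f)
    (hg : IsSynchronous g) : IsSynchronous (f * g) where
  length_apply u := (hf.1 (g u)).trans (hg.1 u)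
  apply_append u w := by
    have h : (f * g) (u ++ w) = f (g u) ++ sect f (g u) (sect g u w) := by
      change f (g (u ++ w)) = _
      rw [hg.2, hf.2]
    rw [h]
    change _ = f (g u) ++ _
    congr 1
    simp only [sect, h]
    rw [List.drop_left' (by rw [hf.1, hg.1])]

lemma isSynchronous_of_mem_sgp (τ : Q → A → A × Q) {f : Function.End (List A)}
    (hf : f ∈ Sgp τ) : IsSynchronous f := by
  induction hf using Submonoid.closure_induction with
  | mem f hf =>
    obtain ⟨q, rfl⟩ := hf
    exact isSynchronous_act τ q
  | one => exact isSynchronous_one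
  | mul f g _ _ hf hg => exact hf.mul hg

lemma map_range_catω (v : List A) (ξ : ℕ → A) (m : ℕ) :
    (List.range m).map (catω v ξ) = v.take m ++ (List.range (m - v.length)).map ξ := by
  induction m with
  | zero => simp
  | succ m ih =>
    rw [List.range_succ, List.map_append, ih, List.map_singleton]
    rcases lt_or_ge m v.length with h | h
    · have hv : catω v ξ m = v[m] := by
        simp [catω, List.getD_eq_getElem?_getD, List.getElem?_eq_getElem h]
      rw [show m + 1 - v.length = 0 by omega, show m - v.length = 0 by omega, hv,
        List.range_zero, List.map_nil, List.append_nil, List.append_nil,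
        ← List.concat_eq_append, List.take_concat_get h]
    · have hξ : catω v ξ m = ξ (m - v.length) := by
        simp [catω, List.getD_eq_getElem?_getD, List.getElem?_eq_none h]
      rw [List.take_of_length_le h, List.take_of_length_le (by omega), hξ,
        show m + 1 - v.length = m - v.length + 1 by omega, List.range_succ, List.map_append,
        List.map_singleton, List.append_assoc]

lemma catω_inj {u u' : List A} (h : u.length = u'.length) {ξ ξ' : ℕ → A} :
    catω u ξ = catω u' ξ' ↔ u = u' ∧ ξ = ξ' := by
  refine ⟨fun heq => ⟨?_, ?_⟩, fun ⟨hu, hξ⟩ => hu ▸ hξ ▸ rfl⟩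
  · refine List.ext_getElem h fun i hi hi' => ?_
    simpa [catω, List.getD_eq_getElem?_getD, hi, hi'] using congrFun heq i
  · funext n
    simpa [catω, List.getD_eq_getElem?_getD, List.getElem?_eq_none, ← h]
      using congrFun heq (n + u.length)

lemma IsSynchronous.extω_catω {f : Function.End (List A)} (hf : IsSynchronous f)
    (v : List A) (ξ : ℕ → A) : extω f (catω v ξ) = catω (f v) (extω (sect f v) ξ) := by
  funext n
  simp only [extω, catω, map_range_catω]
  rcases lt_or_ge n v.length with h | h
  · have hv : f v = f (v.take (n + 1)) ++ sect f (v.take (n + 1)) (v.drop (n + 1)) := by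
      rw [← hf.2, List.take_append_drop]
    have hn : n < (f (v.take (n + 1))).length := by rw [hf.1, List.length_take]; omega
    rw [show n + 1 - v.length = 0 by omega, List.range_zero, List.map_nil, List.append_nil, hv,
      List.getD_append _ _ _ _ hn, List.getD_eq_getElem _ _ hn, List.getD_eq_getElem _ _ hn]
  · rw [List.take_of_length_le (by omega), hf.2,
      List.getD_append_right _ _ _ _ (by rw [hf.1]; omega),
      List.getD_eq_default (l := f v) _ (by rw [hf.1]; omega), hf.1 v,
      show n - v.length + 1 = n + 1 - v.length by omega, List.getD_eq_default (l := v) _ h]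

lemma IsSynchronous.extω_catω_eq_iff {f g : Function.End (List A)} (hf : IsSynchronous f)
    (hg : IsSynchronous g) (v : List A) (ξ : ℕ → A) :
    extω f (catω v ξ) = extω g (catω v ξ) ↔
      f v = g v ∧ extω (sect f v) ξ = extω (sect g v) ξ := by
  rw [hf.extω_catω, hg.extω_catω, catω_inj (by rw [hf.1, hg.1])]

lemma orbitω_catω_cardinal_eq (τ : Q → A → A × Q) {v₁ v₂ : List A}
    (hact : ∀ f ∈ Sgp τ, ∀ g ∈ Sgp τ, f v₁ = g v₁ ↔ f v₂ = g v₂)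
    (hsect : ∀ f ∈ Sgp τ, sect f v₁ = sect f v₂) (ξ : ℕ → A) :
    Cardinal.mk ↥(orbitω τ (catω v₁ ξ)) = Cardinal.mk ↥(orbitω τ (catω v₂ ξ)) := by
  refine Cardinal.mk_image_eq_mk_image_of_eq_iff fun f hf g hg => ?_
  have hf' := isSynchronous_of_mem_sgp τ hf
  have hg' := isSynchronous_of_mem_sgp τ hg
  rw [hf'.extω_catω_eq_iff hg', hf'.extω_catω_eq_iff hg', hact f hf g hg, hsect f hf,
    hsect g hg]

end

theorem orbit_cat_cardinal_eq_of_equiv_general {Q A : Type*} (τ : Q → A → A × Q)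
    (v₁ v₂ : List A) (φ : ↥(orbit τ v₁) ≃ ↥(orbit τ v₂))
    (hv₁ : v₁ ∈ orbit τ v₁) (hφv : (φ ⟨v₁, hv₁⟩ : List A) = v₂)
    (hπ : ∀ f ∈ Sgp τ, ∀ (w : ↥(orbit τ v₁)) (h : f (w : List A) ∈ orbit τ v₁),
      ((φ ⟨f (w : List A), h⟩ : List A)) = f ((φ w : List A)))
    (hsect : ∀ f ∈ Sgp τ, ∀ w : ↥(orbit τ v₁),
      sect f (w : List A) = sect f ((φ w : List A))) :
    ∀ ξ : ℕ → A,
      Cardinal.mk ↥(orbitω τ (catω v₁ ξ)) = Cardinal.mk ↥(orbitω τ (catω v₂ ξ)) := by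
  have hmem : ∀ f ∈ Sgp τ, f v₁ ∈ orbit τ v₁ := fun f hf => ⟨f, hf, rfl⟩
  have hφ : ∀ f (hf : f ∈ Sgp τ), (φ ⟨f v₁, hmem f hf⟩ : List A) = f v₂ := fun f hf => by
    simpa only [hφv] using hπ f hf ⟨v₁, hv₁⟩ (hmem f hf)
  refine orbitω_catω_cardinal_eq τ (fun f hf g hg => ?_) (fun f hf => ?_)
  · rw [← hφ f hf, ← hφ g hg, ← Subtype.ext_iff, φ.injective.eq_iff, Subtype.mk.injEq]
  · simpa only [hφv] using hsect f hf ⟨v₁, hv₁⟩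

/-- if there is a bijection `φ : S·v₁ → S·v₂` with `φ(v₁) = v₂` and
`ψ_{v₁}^φ = ψ_{v₂}` (expressed componentwise: `φ` intertwines the restricted actions,
i.e. `φ(s·w) = s·(φ w)`, and the sections agree, i.e. `s@w = s@(φ w)`), then for every
`ξ ∈ A^ω` the orbits `S·(v₁⌢ξ)` and `S·(v₂⌢ξ)` have the same cardinality. -/
theorem orbit_cat_cardinal_eq_of_equiv {Q A : Type*} [Finite A] (τ : Q → A → A × Q)
    (v₁ v₂ : List A) (φ : ↥(orbit τ v₁) ≃ ↥(orbit τ v₂))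
    (hv₁ : v₁ ∈ orbit τ v₁) (hφv : (φ ⟨v₁, hv₁⟩ : List A) = v₂)
    (hπ : ∀ f ∈ Sgp τ, ∀ (w : ↥(orbit τ v₁)) (h : f (w : List A) ∈ orbit τ v₁),
      ((φ ⟨f (w : List A), h⟩ : List A)) = f ((φ w : List A)))
    (hsect : ∀ f ∈ Sgp τ, ∀ w : ↥(orbit τ v₁),
      sect f (w : List A) = sect f ((φ w : List A))) :
    ∀ ξ : ℕ → A,
      Cardinal.mk ↥(orbitω τ (catω v₁ ξ)) = Cardinal.mk ↥(orbitω τ (catω v₂ ξ)) :=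
  orbit_cat_cardinal_eq_of_equiv_general τ v₁ v₂ φ hv₁ hφv hπ hsect

end Mealy
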